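/- arXiv:2310.14076 — 3 statements merged into one kernel-verified Lean document; each statement's English description precedes it below -/
import Mathlib

section
/- For an undirected graph G = (V,E) with Laplacian L, every eigenvalue lambda of L satisfies lambda <= max over edges (i,j) in E of (d_i + d_j), where d_i denotes the degree of vertex i. -/
/-!
Normalise the eigenvector `w` (replacing it by `-w` if needed) so that its largest entry `w i` is
positive, and let `j` be the neighbour of `i` where `w` is smallest. The eigen-equations at `i` and
`j` give `λ w i ≤ d i (w i - w j)` and `-d j (w i - w j) ≤ λ w j`; subtracting them yields
`λ (w i - w j) ≤ (d i + d j) (w i - w j)`, and for `λ > 0` the first inequality forces `w j < w i`.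
For `λ ≤ 0` any edge will do.
-/

open Matrix

namespace SimpleGraph

variable {V : Type*} [Fintype V] [DecidableEq V] (G : SimpleGraph V) [DecidableRel G.Adj]

theorem lapMatrix_mulVec_eq_smul_apply {R : Type*} [Ring R] {lam : R} {w : V → R}
    (heig : G.lapMatrix R *ᵥ w = lam • w) (i : V) :
    (G.degree i : R) * w i - ∑ u ∈ G.neighborFinset i, w u = lam * w i := by
  rw [← lapMatrix_mulVec_apply, heig, Pi.smul_apply, smul_eq_mul]

variable {R : Type*} [CommRing R] [LinearOrder R] [IsStrictOrderedRing R] {lam : R} {w : V → R}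

theorem mul_le_degree_mul_sub_of_le_neighbors (heig : G.lapMatrix R *ᵥ w = lam • w) {i j : V}
    (hj : ∀ u ∈ G.neighborFinset i, w j ≤ w u) :
    lam * w i ≤ G.degree i * (w i - w j) := by
  have hsum := (G.neighborFinset i).card_nsmul_le_sum w (w j) hj
  rw [nsmul_eq_mul, card_neighborFinset_eq_degree] at hsum
  linarith [G.lapMatrix_mulVec_eq_smul_apply heig i]

theorem neg_degree_mul_sub_le_mul_of_neighbors_le (heig : G.lapMatrix R *ᵥ w = lam • w)
    {i j : V} (hi : ∀ u ∈ G.neighborFinset j, w u ≤ w i) :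
    -(G.degree j * (w i - w j)) ≤ lam * w j := by
  have hsum := (G.neighborFinset j).sum_le_card_nsmul w (w i) hi
  rw [nsmul_eq_mul, card_neighborFinset_eq_degree] at hsum
  linarith [G.lapMatrix_mulVec_eq_smul_apply heig j]

theorem exists_adj_le_degree_add_degree_of_isMax (heig : G.lapMatrix R *ᵥ w = lam • w)
    (hlam : 0 < lam) {i : V} (hi : 0 < w i) (hmax : ∀ k, w k ≤ w i) :
    ∃ j, G.Adj i j ∧ lam ≤ G.degree i + G.degree j := by
  have hnbr : (G.neighborFinset i).Nonempty := by
    rw [Finset.nonempty_iff_ne_empty]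
    intro hempty
    have := G.lapMatrix_mulVec_eq_smul_apply heig i
    rw [← card_neighborFinset_eq_degree, hempty] at this
    simp only [Finset.card_empty, Nat.cast_zero, zero_mul, Finset.sum_empty, sub_zero] at this
    exact (mul_pos hlam hi).ne' this.symm
  obtain ⟨j, hj_mem, hj_min⟩ := (G.neighborFinset i).exists_min_image w hnbr
  have hle_i := G.mul_le_degree_mul_sub_of_le_neighbors heig hj_min
  have hle_j := G.neg_degree_mul_sub_le_mul_of_neighbors_le heig (j := j) fun u _ => hmax u
  have hgap : 0 < w i - w j := by
    by_contra! h
    linarith [mul_pos hlam hi, mul_nonpos_of_nonneg_of_nonpos (Nat.cast_nonneg (G.degree i)) h]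
  refine ⟨j, (mem_neighborFinset G i j).mp hj_mem, le_of_mul_le_mul_right ?_ hgap⟩
  linarith

end SimpleGraph

theorem exists_eq_or_eq_neg_with_pos_max_of_ne_zero {V R : Type*} [Finite V]
    [AddCommGroup R] [LinearOrder R] [IsOrderedAddMonoid R] {v : V → R} (hv : v ≠ 0) :
    ∃ w, (w = v ∨ w = -v) ∧ ∃ i, 0 < w i ∧ ∀ k, w k ≤ w i := by
  obtain ⟨k, hk⟩ := Function.ne_iff.mp hv
  have : Nonempty V := ⟨k⟩
  have key : ∀ w : V → R, 0 < w k → ∃ i, 0 < w i ∧ ∀ k, w k ≤ w i := fun w hw => by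
    obtain ⟨i, hi⟩ := Finite.exists_max w
    exact ⟨i, hw.trans_le (hi k), hi⟩
  rcases hk.lt_or_gt with hneg | hpos
  · exact ⟨-v, Or.inr rfl, key _ (neg_pos.mpr hneg)⟩
  · exact ⟨v, Or.inl rfl, key _ hpos⟩

/-- Anderson–Morley bound: every eigenvalue `lam` of the Laplacian of a graph
with at least one edge satisfies `lam ≤ max_{(i,j) ∈ E} (d_i + d_j)`,
i.e. there is an edge `(i,j)` with `lam ≤ d_i + d_j`. -/
theorem anderson_morley_bound {n : ℕ} (G : SimpleGraph (Fin n))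
    [DecidableRel G.Adj] (hE : ∃ i j, G.Adj i j)
    (lam : ℝ) (v : Fin n → ℝ) (hv : v ≠ 0)
    (heig : G.lapMatrix ℝ *ᵥ v = lam • v) :
    ∃ i j, G.Adj i j ∧ lam ≤ (G.degree i : ℝ) + (G.degree j : ℝ) := by
  rcases le_or_gt lam 0 with hlam | hlam
  · obtain ⟨i, j, hij⟩ := hE
    exact ⟨i, j, hij, hlam.trans (by positivity)⟩
  obtain ⟨w, hw, i, hi, hmax⟩ := exists_eq_or_eq_neg_with_pos_max_of_ne_zero hv
  have hweig : G.lapMatrix ℝ *ᵥ w = lam • w := by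
    rcases hw with rfl | rfl
    · exact heig
    · rw [mulVec_neg, heig, smul_neg]
  obtain ⟨j, hij, hle⟩ := G.exists_adj_le_degree_add_degree_of_isMax hweig hlam hi hmax
  exact ⟨i, j, hij, hle⟩
end

section
/- Let G = (V,E) be a connected undirected graph with minimum degree d_min and Cheeger constant h_G, and let lambda_2 be the second-smallest eigenvalue of its Laplacian. Then lambda_2 >= (1/2) * d_min * h_G^2. -/
open Matrix

/-- The volume of a vertex set: the sum of degrees in `S`. -/
noncomputable def volume {n : ℕ} (G : SimpleGraph (Fin n)) [DecidableRel G.Adj]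
    (S : Finset (Fin n)) : ℝ :=
  ∑ i ∈ S, (G.degree i : ℝ)

/-- The number of boundary edges of `S`: edges with one end in `S` and the
other outside `S`. -/
noncomputable def boundaryEdges {n : ℕ} (G : SimpleGraph (Fin n))
    [DecidableRel G.Adj] (S : Finset (Fin n)) : ℝ :=
  ((Finset.univ.filter
      (fun p : Fin n × Fin n => p.1 ∈ S ∧ p.2 ∉ S ∧ G.Adj p.1 p.2)).card : ℝ)

/-- The Cheeger constant: `h_G = min_{S : vol(S) ≤ vol(V)/2} |∂S| / vol(S)`. -/
noncomputable def cheegerConst {n : ℕ} (G : SimpleGraph (Fin n))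
    [DecidableRel G.Adj] : ℝ :=
  sInf { x : ℝ | ∃ S : Finset (Fin n), S.Nonempty ∧
    volume G S ≤ volume G Finset.univ / 2 ∧ x = boundaryEdges G S / volume G S }

namespace CheegerAux
open Finset

variable {n : ℕ} (G : SimpleGraph (Fin (n + 2))) [DecidableRel G.Adj]


lemma degree_pos (hconn : G.Connected) (i : Fin (n+2)) : 0 < G.degree i := by
  rw [SimpleGraph.degree_pos_iff_exists_adj]
  obtain ⟨j, hj⟩ := exists_ne i
  obtain ⟨w⟩ := hconn.preconnected i j
  cases w with
  | nil => exact absurd rfl hj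
  | cons h _ => exact ⟨_, h⟩

lemma volume_nonneg (S : Finset (Fin (n+2))) : 0 ≤ volume G S :=
  Finset.sum_nonneg fun i _ => by positivity

lemma volume_pos (hconn : G.Connected) {S : Finset (Fin (n+2))} (hS : S.Nonempty) :
    0 < volume G S :=
  Finset.sum_pos (fun i _ => by exact_mod_cast degree_pos G hconn i) hS

lemma volume_mono {S T : Finset (Fin (n+2))} (h : S ⊆ T) : volume G S ≤ volume G T :=
  Finset.sum_le_sum_of_subset_of_nonneg h fun i _ _ => by positivity

lemma boundaryEdges_nonneg (S : Finset (Fin (n+2))) : 0 ≤ boundaryEdges G S := by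
  unfold boundaryEdges; positivity

lemma cheeger_nonneg : 0 ≤ cheegerConst G := by
  apply Real.sInf_nonneg
  rintro x ⟨S, -, -, rfl⟩
  exact div_nonneg (boundaryEdges_nonneg G S) (volume_nonneg G S)

lemma cheeger_mul_vol_le (hconn : G.Connected) {S : Finset (Fin (n+2))} (hS : S.Nonempty)
    (hhalf : volume G S ≤ volume G Finset.univ / 2) :
    cheegerConst G * volume G S ≤ boundaryEdges G S := by
  have h1 : cheegerConst G ≤ boundaryEdges G S / volume G S := by
    apply csInf_le
    · exact ⟨0, fun x ⟨T, _, _, hx⟩ => hx ▸ div_nonneg (boundaryEdges_nonneg G T) (volume_nonneg G T)⟩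
    · exact ⟨S, hS, hhalf, rfl⟩
  have h2 := volume_pos G hconn hS
  calc cheegerConst G * volume G S ≤ (boundaryEdges G S / volume G S) * volume G S := by
        exact mul_le_mul_of_nonneg_right h1 h2.le
    _ = boundaryEdges G S := by field_simp

lemma boundaryEdges_eq_sum (S : Finset (Fin (n+2))) :
    boundaryEdges G S = ∑ i, ∑ j, if i ∈ S ∧ j ∉ S ∧ G.Adj i j then (1:ℝ) else 0 := by
  unfold boundaryEdges
  rw [Finset.card_filter]
  push_cast
  rw [Fintype.sum_prod_type]

lemma coarea (hconn : G.Connected) (N : ℕ) :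
    ∀ u : Fin (n+2) → ℝ, (Finset.univ.filter fun i => u i ≠ 0).card ≤ N →
    (∀ i, 0 ≤ u i) →
    volume G (Finset.univ.filter fun i => u i ≠ 0) ≤ volume G Finset.univ / 2 →
    cheegerConst G * ∑ i, (G.degree i : ℝ) * u i ≤
      ∑ i, ∑ j, if G.Adj i j then max (u i - u j) 0 else 0 := by
  induction N with
  | zero =>
    intro u hcard _ _
    have hu : ∀ i, u i = 0 := by
      intro i
      by_contra hi
      have : i ∈ Finset.univ.filter fun i => u i ≠ 0 := by simp [hi]
      have := Finset.card_pos.mpr ⟨i, this⟩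
      omega
    simp [hu]
  | succ N ih =>
    intro u hcard hpos hhalf
    set T := Finset.univ.filter fun i => u i ≠ 0 with hT
    by_cases hTne : T.Nonempty
    case neg =>
      have hu : ∀ i, u i = 0 := by
        intro i
        by_contra hi
        exact hTne ⟨i, by simp [hT, hi]⟩
      simp [hu]
    -- main case
    have hmemT : ∀ i, i ∈ T ↔ u i ≠ 0 := by intro i; simp [hT]
    set m := T.inf' hTne u with hm
    obtain ⟨i0, hi0T, hi0⟩ := Finset.exists_mem_eq_inf' hTne u
    have hmle : ∀ i ∈ T, m ≤ u i := fun i hi => Finset.inf'_le u hi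
    have hmpos : 0 < m := by
      rw [hm, hi0]
      have := (hmemT i0).mp hi0T
      exact lt_of_le_of_ne (hpos i0) (Ne.symm this)
    set u' := fun i => if u i = 0 then 0 else u i - m with hu'
    have hu'nonneg : ∀ i, 0 ≤ u' i := by
      intro i
      simp only [hu']
      split_ifs with h
      · exact le_refl 0
      · exact sub_nonneg.mpr (hmle i ((hmemT i).mpr h))
    have hsupp' : (Finset.univ.filter fun i => u' i ≠ 0) ⊆ T.erase i0 := by
      intro i hi
      simp only [Finset.mem_filter, Finset.mem_univ, true_and] at hi
      have hui : u i ≠ 0 := by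
        intro h0
        apply hi
        simp [hu', h0]
      have hiT : i ∈ T := (hmemT i).mpr hui
      have hne : i ≠ i0 := by
        intro h
        apply hi
        subst h
        have : u i = m := by rw [hm, hi0]
        simp [hu', hui, this]
      exact Finset.mem_erase.mpr ⟨hne, hiT⟩
    have hcard' : (Finset.univ.filter fun i => u' i ≠ 0).card ≤ N := by
      have h1 := Finset.card_le_card hsupp'
      have h2 := Finset.card_erase_of_mem hi0T
      omega
    have hhalf' : volume G (Finset.univ.filter fun i => u' i ≠ 0) ≤ volume G Finset.univ / 2 :=
      le_trans (volume_mono G (hsupp'.trans (Finset.erase_subset i0 T))) hhalf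
    have hIH := ih u' hcard' hu'nonneg hhalf'
    -- identity (a)
    have ha : ∑ i, (G.degree i : ℝ) * u i
        = (∑ i, (G.degree i : ℝ) * u' i) + m * volume G T := by
      have : ∀ i, (G.degree i : ℝ) * u i
          = (G.degree i : ℝ) * u' i + (if i ∈ T then (G.degree i : ℝ) * m else 0) := by
        intro i
        by_cases h : u i = 0
        · have : i ∉ T := fun hh => (hmemT i).mp hh h
          simp [hu', h, this]
        · have : i ∈ T := (hmemT i).mpr h
          simp only [hu', if_neg h, if_pos this]
          ring
      rw [Finset.sum_congr rfl (fun i _ => this i), Finset.sum_add_distrib]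
      congr 1
      rw [Finset.sum_ite_mem, Finset.univ_inter, volume, Finset.mul_sum]
      exact Finset.sum_congr rfl fun i _ => mul_comm _ _
    -- identity (b)
    have hbpt : ∀ i j, (if G.Adj i j then max (u i - u j) 0 else 0)
        = (if G.Adj i j then max (u' i - u' j) 0 else 0)
          + (if i ∈ T ∧ j ∉ T ∧ G.Adj i j then m else 0) := by
      intro i j
      by_cases hadj : G.Adj i j
      · by_cases hi : u i = 0
        · have hiT : i ∉ T := fun hh => (hmemT i).mp hh hi
          have h1 : max (u i - u j) 0 = 0 := max_eq_right (by linarith [hpos j])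
          have h2 : max (u' i - u' j) 0 = 0 :=
            max_eq_right (by simp only [hu', if_pos hi]; linarith [hu'nonneg j])
          simp [hadj, hiT, h1, h2]
        · have hiT : i ∈ T := (hmemT i).mpr hi
          by_cases hj : u j = 0
          · have hjT : j ∉ T := fun hh => (hmemT j).mp hh hj
            have hmi := hmle i hiT
            have h1 : max (u i - u j) 0 = u i := by
              rw [hj, sub_zero]; exact max_eq_left (by linarith)
            have h2 : max (u' i - u' j) 0 = u i - m := by
              simp only [hu', if_neg hi, if_pos hj, sub_zero]
              exact max_eq_left (by linarith)
            simp only [if_pos hadj, if_pos (show i ∈ T ∧ j ∉ T ∧ G.Adj i j from ⟨hiT, hjT, hadj⟩), h1, h2]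
            ring
          · have hjT : j ∈ T := (hmemT j).mpr hj
            have : u' i - u' j = u i - u j := by
              simp only [hu', if_neg hi, if_neg hj]; ring
            simp [hadj, hjT, this]
      · simp [hadj]
    have hb : (∑ i, ∑ j, if G.Adj i j then max (u i - u j) 0 else 0)
        = (∑ i, ∑ j, if G.Adj i j then max (u' i - u' j) 0 else 0)
          + m * boundaryEdges G T := by
      rw [boundaryEdges_eq_sum, Finset.mul_sum]
      simp_rw [Finset.mul_sum, mul_ite, mul_one, mul_zero, ← Finset.sum_add_distrib]
      exact Finset.sum_congr rfl fun i _ => Finset.sum_congr rfl fun j _ => hbpt i j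
    have hb1 := cheeger_mul_vol_le G hconn hTne hhalf
    have hb2 := mul_le_mul_of_nonneg_left hb1 hmpos.le
    have hch := cheeger_nonneg G
    rw [ha, hb]
    rw [mul_add]
    have : cheegerConst G * (m * volume G T) = m * (cheegerConst G * volume G T) := by ring
    rw [this]
    exact add_le_add hIH hb2


lemma row_sum_const (i : Fin (n+2)) (c : ℝ) :
    ∑ j, (if G.Adj i j then c else 0) = (G.degree i : ℝ) * c := by
  rw [← Finset.sum_filter, ← SimpleGraph.neighborFinset_eq_filter, Finset.sum_const,
    nsmul_eq_mul, SimpleGraph.degree]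

-- (A) absolute sum = twice the one-sided sum
lemma abs_eq_two_max (g : Fin (n+2) → ℝ) :
    ∑ i, ∑ j, (if G.Adj i j then |g i ^ 2 - g j ^ 2| else 0)
      = 2 * ∑ i, ∑ j, (if G.Adj i j then max (g i ^ 2 - g j ^ 2) 0 else 0) := by
  have habs : ∀ a b : ℝ, |a - b| = max (a - b) 0 + max (b - a) 0 := by
    intro a b
    rcases le_total a b with h | h
    · rw [abs_sub_comm, abs_of_nonneg (by linarith), max_eq_right (by linarith),
        max_eq_left (by linarith)]; ring
    · rw [abs_of_nonneg (by linarith), max_eq_left (by linarith),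
        max_eq_right (by linarith)]; ring
  have : ∀ i j, (if G.Adj i j then |g i ^ 2 - g j ^ 2| else 0)
      = (if G.Adj i j then max (g i ^ 2 - g j ^ 2) 0 else 0)
        + (if G.Adj i j then max (g j ^ 2 - g i ^ 2) 0 else 0) := by
    intro i j
    by_cases h : G.Adj i j <;> simp [h, habs]
  simp_rw [this, Finset.sum_add_distrib]
  have hswap : ∑ i, ∑ j, (if G.Adj i j then max (g j ^ 2 - g i ^ 2) 0 else 0)
      = ∑ i, ∑ j, (if G.Adj i j then max (g i ^ 2 - g j ^ 2) 0 else 0) := by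
    rw [Finset.sum_comm]
    exact Finset.sum_congr rfl fun i _ => Finset.sum_congr rfl fun j _ =>
      if_congr (G.adj_comm j i) rfl rfl
  rw [hswap]; ring

-- (B)
lemma sum_sq_add_le (g : Fin (n+2) → ℝ) :
    ∑ i, ∑ j, (if G.Adj i j then (g i + g j) ^ 2 else 0)
      ≤ 4 * ∑ i, (G.degree i : ℝ) * g i ^ 2 := by
  have h1 : ∑ i, ∑ j, (if G.Adj i j then (g i + g j) ^ 2 else 0)
      ≤ ∑ i, ∑ j, (if G.Adj i j then 2 * (g i ^ 2 + g j ^ 2) else 0) := by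
    apply Finset.sum_le_sum; intro i _
    apply Finset.sum_le_sum; intro j _
    by_cases h : G.Adj i j <;> simp [h]
    nlinarith [sq_nonneg (g i - g j)]
  have h2 : ∑ i, ∑ j, (if G.Adj i j then 2 * (g i ^ 2 + g j ^ 2) else 0)
      = 4 * ∑ i, (G.degree i : ℝ) * g i ^ 2 := by
    have : ∀ i j, (if G.Adj i j then 2 * (g i ^ 2 + g j ^ 2) else 0)
        = (if G.Adj i j then 2 * g i ^ 2 else 0) + (if G.Adj i j then 2 * g j ^ 2 else 0) := by
      intro i j; by_cases h : G.Adj i j <;> simp [h]; ring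
    simp_rw [this, Finset.sum_add_distrib]
    have hA : ∑ i, ∑ j, (if G.Adj i j then 2 * g i ^ 2 else 0)
        = ∑ i, (G.degree i : ℝ) * (2 * g i ^ 2) := by
      exact Finset.sum_congr rfl fun i _ => row_sum_const G i _
    have hB : ∑ i, ∑ j, (if G.Adj i j then 2 * g j ^ 2 else 0)
        = ∑ i, (G.degree i : ℝ) * (2 * g i ^ 2) := by
      rw [Finset.sum_comm]
      refine Finset.sum_congr rfl fun j _ => ?_
      rw [← row_sum_const G j (2 * g j ^ 2)]
      exact Finset.sum_congr rfl fun i _ => if_congr (G.adj_comm i j) rfl rfl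
    rw [hA, hB, ← Finset.sum_add_distrib]
    rw [Finset.mul_sum]
    exact Finset.sum_congr rfl fun i _ => by ring
  linarith

-- (C) Cauchy–Schwarz
lemma cs_ineq (g : Fin (n+2) → ℝ) (hg : ∀ i, 0 ≤ g i) :
    (∑ i, ∑ j, (if G.Adj i j then |g i ^ 2 - g j ^ 2| else 0)) ^ 2
      ≤ (∑ i, ∑ j, (if G.Adj i j then (g i - g j) ^ 2 else 0))
        * (∑ i, ∑ j, (if G.Adj i j then (g i + g j) ^ 2 else 0)) := by
  have CS := Finset.sum_mul_sq_le_sq_mul_sq Finset.univ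
    (fun p : Fin (n+2) × Fin (n+2) => if G.Adj p.1 p.2 then |g p.1 - g p.2| else 0)
    (fun p : Fin (n+2) × Fin (n+2) => if G.Adj p.1 p.2 then g p.1 + g p.2 else 0)
  have e1 : ∑ p : Fin (n+2) × Fin (n+2),
      (if G.Adj p.1 p.2 then |g p.1 - g p.2| else 0) * (if G.Adj p.1 p.2 then g p.1 + g p.2 else 0)
      = ∑ i, ∑ j, (if G.Adj i j then |g i ^ 2 - g j ^ 2| else 0) := by
    rw [Fintype.sum_prod_type]
    refine Finset.sum_congr rfl fun i _ => Finset.sum_congr rfl fun j _ => ?_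
    by_cases h : G.Adj i j <;> simp [h]
    rw [← abs_of_nonneg (show (0:ℝ) ≤ g i + g j by linarith [hg i, hg j]), ← abs_mul]
    congr 1; ring
  have e2 : ∑ p : Fin (n+2) × Fin (n+2), (if G.Adj p.1 p.2 then |g p.1 - g p.2| else 0) ^ 2
      = ∑ i, ∑ j, (if G.Adj i j then (g i - g j) ^ 2 else 0) := by
    rw [Fintype.sum_prod_type]
    refine Finset.sum_congr rfl fun i _ => Finset.sum_congr rfl fun j _ => ?_
    by_cases h : G.Adj i j <;> simp [h, sq_abs]
  have e3 : ∑ p : Fin (n+2) × Fin (n+2), (if G.Adj p.1 p.2 then g p.1 + g p.2 else 0) ^ 2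
      = ∑ i, ∑ j, (if G.Adj i j then (g i + g j) ^ 2 else 0) := by
    rw [Fintype.sum_prod_type]
    refine Finset.sum_congr rfl fun i _ => Finset.sum_congr rfl fun j _ => ?_
    by_cases h : G.Adj i j <;> simp [h]
  rw [e1, e2, e3] at CS
  exact CS

end CheegerAux

set_option maxHeartbeats 2000000

/-- For a connected graph, the second-smallest Laplacian eigenvalue satisfies
`λ₂ ≥ (1/2) d_min h_G²`. -/
theorem lambda_two_ge_cheeger {n : ℕ} (G : SimpleGraph (Fin (n + 2)))
    [DecidableRel G.Adj] (hconn : G.Connected)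
    (hL : (G.lapMatrix ℝ).IsHermitian)
    (lam : Fin (n + 2) → ℝ) (hmono : Monotone lam)
    (heig : ∃ σ : Equiv.Perm (Fin (n + 2)), ∀ k, lam k = hL.eigenvalues (σ k)) :
    lam 1 ≥ (1 / 2) *
      (Finset.univ.inf' Finset.univ_nonempty (fun i => (G.degree i : ℝ))) *
      (cheegerConst G) ^ 2 := by
  open Finset CheegerAux in
  obtain ⟨σ, hσ⟩ := heig
  have hPSD : (G.lapMatrix ℝ).PosSemidef := SimpleGraph.posSemidef_lapMatrix ℝ G
  have hlamnn : ∀ k : Fin (n+2), 0 ≤ lam k := fun k => (hσ k) ▸ hPSD.eigenvalues_nonneg (σ k)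
  have hker : ∀ x : Fin (n+2) → ℝ, G.lapMatrix ℝ *ᵥ x = 0 → ∀ i j, x i = x j := by
    intro x hx i j
    have h := (SimpleGraph.lapMatrix_mulVec_eq_zero_iff_forall_reachable G (x := x)).mp
      hx
    exact h i j (hconn.preconnected i j)
  have hbne : ∀ k : Fin (n+2), ∃ i, hL.eigenvectorBasis k i ≠ 0 := by
    intro k
    by_contra hc
    push_neg at hc
    have hb0 : hL.eigenvectorBasis k = 0 := by
      ext i
      exact hc i
    exact hL.eigenvectorBasis.orthonormal.ne_zero k hb0
  have hlam1ne : lam 1 ≠ 0 := by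
    intro h10
    have h00 : lam 0 = 0 := le_antisymm (h10 ▸ hmono (Fin.zero_le 1)) (hlamnn 0)
    have hz : ∀ k : Fin (n+2), lam k = 0 →
        G.lapMatrix ℝ *ᵥ (fun i => hL.eigenvectorBasis (σ k) i) = 0 := by
      intro k hk
      have h := hL.mulVec_eigenvectorBasis (σ k)
      rw [← hσ k, hk] at h
      simpa using h
    have hc0 := hker _ (hz 0 h00)
    have hc1 := hker _ (hz 1 h10)
    have hne01 : σ 0 ≠ σ 1 := σ.injective.ne (by simp [Fin.ext_iff])
    have horth : ∑ i, hL.eigenvectorBasis (σ 0) i * hL.eigenvectorBasis (σ 1) i = 0 := by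
      have h := hL.eigenvectorBasis.orthonormal.2 hne01
      simp only at h
      rw [PiLp.inner_apply] at h
      simpa [RCLike.inner_apply, mul_comm] using h
    rw [Finset.sum_congr rfl (fun i _ => by rw [hc0 i 0, hc1 i 0])] at horth
    rw [Finset.sum_const, Finset.card_univ, nsmul_eq_mul] at horth
    have hcard : ((Fintype.card (Fin (n+2)) : ℝ)) ≠ 0 := by
      simp only [Fintype.card_fin]
      positivity
    rcases mul_eq_zero.mp horth with h | h
    · exact absurd h hcard
    rcases mul_eq_zero.mp h with h | h
    · obtain ⟨i, hi⟩ := hbne (σ 0)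
      exact hi (by rw [hc0 i 0, h])
    · obtain ⟨i, hi⟩ := hbne (σ 1)
      exact hi (by rw [hc1 i 0, h])
  have hlam1pos : 0 < lam 1 := lt_of_le_of_ne (hlamnn 1) (Ne.symm hlam1ne)
  -- the eigenvector for `lam 1`
  set f0 : Fin (n+2) → ℝ := fun i => hL.eigenvectorBasis (σ 1) i with hf0def
  have hf0eig : G.lapMatrix ℝ *ᵥ f0 = lam 1 • f0 := by
    have h := hL.mulVec_eigenvectorBasis (σ 1)
    rw [← hσ 1] at h
    exact h
  have hone : ∀ y : Fin (n+2) → ℝ, (fun _ => (1:ℝ)) ⬝ᵥ (G.lapMatrix ℝ *ᵥ y) = 0 := by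
    intro y
    rw [Matrix.dotProduct_mulVec]
    have hsymm : (G.lapMatrix ℝ)ᵀ = G.lapMatrix ℝ := G.isSymm_lapMatrix ℝ
    have hv : (fun _ => (1:ℝ)) ᵥ* G.lapMatrix ℝ = 0 := by
      rw [← hsymm, Matrix.vecMul_transpose, G.lapMatrix_mulVec_const_eq_zero]
    rw [hv, zero_dotProduct]
  have hf0sum : ∑ i, f0 i = 0 := by
    have h1 := hone f0
    rw [hf0eig] at h1
    have h2 : (fun _ => (1:ℝ)) ⬝ᵥ (lam 1 • f0) = lam 1 * ∑ i, f0 i := by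
      simp [dotProduct, Finset.mul_sum]
    rw [h2] at h1
    exact (mul_eq_zero.mp h1).resolve_left hlam1ne
  have hf0ne : ∃ i, f0 i ≠ 0 := hbne (σ 1)
  -- choose the sign so that the positive side has small volume
  have hmain : ∃ f : Fin (n+2) → ℝ, (G.lapMatrix ℝ *ᵥ f = lam 1 • f) ∧ (∑ i, f i = 0) ∧
      (∃ i, f i ≠ 0) ∧
      volume G (Finset.univ.filter fun i => 0 < f i) ≤ volume G Finset.univ / 2 := by
    by_cases hside : volume G (Finset.univ.filter fun i => 0 < f0 i) ≤ volume G Finset.univ / 2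
    · exact ⟨f0, hf0eig, hf0sum, hf0ne, hside⟩
    · refine ⟨fun i => -f0 i, ?_, ?_, ?_, ?_⟩
      · have : (fun i => -f0 i) = -f0 := rfl
        rw [this, Matrix.mulVec_neg, hf0eig]
        ext i
        simp
      · simp [hf0sum]
      · obtain ⟨i, hi⟩ := hf0ne
        exact ⟨i, by simpa using hi⟩
      · have hdisj : Disjoint (Finset.univ.filter fun i => 0 < f0 i)
            (Finset.univ.filter fun i => 0 < -f0 i) := by
          rw [Finset.disjoint_left]
          intro a ha hb
          simp only [Finset.mem_filter, Finset.mem_univ, true_and] at ha hb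
          linarith
        have hun : volume G (Finset.univ.filter fun i => 0 < f0 i)
            + volume G (Finset.univ.filter fun i => 0 < -f0 i)
            = volume G ((Finset.univ.filter fun i => 0 < f0 i)
              ∪ (Finset.univ.filter fun i => 0 < -f0 i)) :=
          (Finset.sum_union hdisj).symm
        have hle : volume G ((Finset.univ.filter fun i => 0 < f0 i)
            ∪ (Finset.univ.filter fun i => 0 < -f0 i)) ≤ volume G Finset.univ :=
          volume_mono G (Finset.subset_univ _)
        push_neg at hside
        have : volume G (Finset.univ.filter fun i => 0 < -f0 i)
            ≤ volume G Finset.univ / 2 := by linarith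
        simpa using this
  obtain ⟨f, hfeig, hfsum, hfne, hfhalf⟩ := hmain
  set g : Fin (n+2) → ℝ := fun i => max (f i) 0 with hgdef
  have hgnn : ∀ i, 0 ≤ g i := fun i => le_max_right _ _
  have hgf : ∀ i, f i ≤ g i := fun i => le_max_left _ _
  have hfpos : ∃ i, 0 < f i := by
    obtain ⟨i, hi⟩ := hfne
    by_contra hc
    push_neg at hc
    have := (Finset.sum_eq_zero_iff_of_nonpos (fun j _ => hc j)).mp hfsum
    exact hi (this i (Finset.mem_univ i))
  have hsupp : (Finset.univ.filter fun i => g i ^ 2 ≠ 0)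
      = (Finset.univ.filter fun i => 0 < f i) := by
    ext i
    simp only [Finset.mem_filter, Finset.mem_univ, true_and]
    constructor
    · intro h
      by_contra hng
      push_neg at hng
      exact h (by rw [hgdef]; simp [max_eq_right hng])
    · intro h hsq
      have hgi : g i = f i := max_eq_left h.le
      rw [hgi] at hsq
      exact (ne_of_gt h) (sq_eq_zero_iff.mp hsq)
  -- the Rayleigh quotient of g is at most lam 1
  have hclaimA : ∑ i, g i * ((G.lapMatrix ℝ *ᵥ g) i) ≤ lam 1 * ∑ i, g i ^ 2 := by
    rw [Finset.mul_sum]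
    apply Finset.sum_le_sum
    intro i _
    by_cases hi : 0 < f i
    · have hgi : g i = f i := max_eq_left hi.le
      have hLg : (G.lapMatrix ℝ *ᵥ g) i ≤ (G.lapMatrix ℝ *ᵥ f) i := by
        rw [SimpleGraph.lapMatrix_mulVec_apply, SimpleGraph.lapMatrix_mulVec_apply]
        have hnb : ∑ u ∈ G.neighborFinset i, f u ≤ ∑ u ∈ G.neighborFinset i, g u :=
          Finset.sum_le_sum fun u _ => hgf u
        rw [hgi]
        linarith
      have hLf : (G.lapMatrix ℝ *ᵥ f) i = lam 1 * f i := by rw [hfeig]; simp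
      calc g i * (G.lapMatrix ℝ *ᵥ g) i ≤ g i * (lam 1 * f i) :=
            mul_le_mul_of_nonneg_left (hLg.trans_eq hLf) (hgnn i)
        _ = lam 1 * g i ^ 2 := by rw [hgi]; ring
    · have hgi : g i = 0 := max_eq_right (not_lt.mp hi)
      rw [hgi]
      simp
  have hquad : ∑ i, g i * ((G.lapMatrix ℝ *ᵥ g) i)
      = (∑ i, ∑ j, if G.Adj i j then (g i - g j)^2 else 0) / 2 := by
    have h := G.lapMatrix_toLinearMap₂' (R := ℝ) g
    rw [toLinearMap₂'_apply'] at h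
    exact h
  set W := ∑ i, (G.degree i : ℝ) * g i ^ 2 with hWdef
  set Ng := ∑ i, g i ^ 2 with hNgdef
  set Q2 := ∑ i, ∑ j, if G.Adj i j then (g i - g j)^2 else 0 with hQ2def
  set M1 := ∑ i, ∑ j, if G.Adj i j then max (g i^2 - g j^2) 0 else 0 with hM1def
  have hco : cheegerConst G * W ≤ M1 := by
    have h := coarea G hconn (Fintype.card (Fin (n+2))) (fun i => g i ^ 2)
      (Finset.card_le_univ _) (fun i => sq_nonneg _) (by rw [hsupp]; exact hfhalf)
    exact h
  have hQ2nn : 0 ≤ Q2 := by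
    apply Finset.sum_nonneg
    intro i _
    apply Finset.sum_nonneg
    intro j _
    positivity
  have hCS2 : (2 * M1)^2 ≤ Q2 * (4 * W) := by
    have h1 := cs_ineq G g hgnn
    have h2 := abs_eq_two_max G g
    have h3 := sum_sq_add_le G g
    have h4 : (2 * M1)^2 ≤ Q2 * (∑ i, ∑ j, if G.Adj i j then (g i + g j) ^ 2 else 0) := by
      rw [← h2]
      exact h1
    calc (2 * M1)^2 ≤ Q2 * (∑ i, ∑ j, if G.Adj i j then (g i + g j) ^ 2 else 0) := h4
      _ ≤ Q2 * (4 * W) := mul_le_mul_of_nonneg_left h3 hQ2nn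
  obtain ⟨i0, hi0⟩ := hfpos
  have hgi0 : 0 < g i0 := lt_of_lt_of_le hi0 (hgf i0)
  have hWpos : 0 < W := by
    apply Finset.sum_pos' (fun i _ => by positivity) ⟨i0, Finset.mem_univ i0, ?_⟩
    have hd := degree_pos G hconn i0
    have : (0:ℝ) < (G.degree i0 : ℝ) := by exact_mod_cast hd
    positivity
  have hNgpos : 0 < Ng := by
    apply Finset.sum_pos' (fun i _ => by positivity) ⟨i0, Finset.mem_univ i0, ?_⟩
    positivity
  have hchnn := cheeger_nonneg G
  have hkey : cheegerConst G ^ 2 * W ≤ Q2 := by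
    have h4 : (2 * (cheegerConst G * W))^2 ≤ (2 * M1)^2 := by
      have hnn : 0 ≤ 2 * (cheegerConst G * W) := by positivity
      have hle : 2 * (cheegerConst G * W) ≤ 2 * M1 := by linarith
      exact pow_le_pow_left₀ hnn hle 2
    have h5 := h4.trans hCS2
    nlinarith [hWpos]
  have hdmin : ∀ i : Fin (n+2),
      (Finset.univ.inf' Finset.univ_nonempty (fun i => (G.degree i : ℝ))) ≤ (G.degree i : ℝ) :=
    fun i => Finset.inf'_le _ (Finset.mem_univ i)
  set dmin := Finset.univ.inf' Finset.univ_nonempty (fun i => (G.degree i : ℝ)) with hdmindef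
  have hW2 : dmin * Ng ≤ W := by
    rw [hNgdef, Finset.mul_sum]
    apply Finset.sum_le_sum
    intro i _
    exact mul_le_mul_of_nonneg_right (hdmin i) (sq_nonneg _)
  have hRay : Q2 / 2 ≤ lam 1 * Ng := by
    rw [← hquad]
    exact hclaimA
  have hfin : (1/2) * dmin * cheegerConst G ^ 2 * Ng ≤ lam 1 * Ng := by
    nlinarith [mul_le_mul_of_nonneg_left hW2 (sq_nonneg (cheegerConst G))]
  have := le_of_mul_le_mul_right hfin hNgpos
  linarith
end

section
/- Let G be an undirected graph with Laplacian L, and adopt the spanning rooted forest counts N and N_{xy} defined via the matrix forest theorem. Then for any edge e = (i,j), the expected conflict change satisfies - sigma^2 ||(I+L)^{-1} b_e||_2^2 / (1 + b_e^T (I+L)^{-1} b_e) = - sigma^2 * N^{-1} * (N + N_{ij} + N_{ji})^{-1} * sum over k in V of (N_{ik} - N_{jk})^2. -/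
open Matrix

/-- With the matrix forest theorem encoding (`N = det(I+L)` total spanning
rooted forests, `(I+L)⁻¹ x y = C x y / N` where `C x y` counts spanning rooted
forests with `x, y` in the same tree rooted at `x`, and `F x y = C y y - C x y`
the number of forests in which `x` roots its tree and `y` is in a different
tree), the expected conflict change of adding edge `e = (i,j)` satisfies
`-σ²‖(I+L)⁻¹b_e‖²/(1 + b_eᵀ(I+L)⁻¹b_e)
   = -σ² N⁻¹ (N + F i j + F j i)⁻¹ ∑ₖ (F i k - F j k)²`. -/
theorem forest_interpretation_expected_conflict_change {n : ℕ}
    (G : SimpleGraph (Fin n)) [DecidableRel G.Adj]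
    (N : ℝ) (C F : Fin n → Fin n → ℝ)
    (hN : N = (1 + G.lapMatrix ℝ).det)
    (hC : ∀ x y, (1 + G.lapMatrix ℝ)⁻¹ x y = C x y / N)
    (hF : ∀ x y, F x y = C y y - C x y)
    (σ : ℝ) (i j : Fin n) (hij : i ≠ j) :
    -(σ ^ 2 *
        (((1 + G.lapMatrix ℝ)⁻¹ *ᵥ (Pi.single i 1 - Pi.single j 1 : Fin n → ℝ)) ⬝ᵥ
          ((1 + G.lapMatrix ℝ)⁻¹ *ᵥ (Pi.single i 1 - Pi.single j 1)))
        / (1 + (Pi.single i 1 - Pi.single j 1 : Fin n → ℝ) ⬝ᵥ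
            ((1 + G.lapMatrix ℝ)⁻¹ *ᵥ (Pi.single i 1 - Pi.single j 1))))
      = -(σ ^ 2 * N⁻¹ * (N + F i j + F j i)⁻¹ * ∑ k, (F i k - F j k) ^ 2) := by
  set M : Matrix (Fin n) (Fin n) ℝ := 1 + G.lapMatrix ℝ with hM
  have hMpd : M.PosDef :=
    (Matrix.PosDef.one).add_posSemidef (SimpleGraph.posSemidef_lapMatrix ℝ G)
  have hApd : M⁻¹.PosDef := hMpd.inv
  have hN0 : 0 < N := hN ▸ hMpd.det_pos
  -- symmetry of the inverse
  have hsym : ∀ x y, M⁻¹ x y = M⁻¹ y x := by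
    intro x y
    have := hApd.isHermitian
    rw [Matrix.IsHermitian] at this
    conv_lhs => rw [← this]
    simp [Matrix.conjTranspose_apply]
  have hCsym : ∀ x y, C x y = C y x := by
    intro x y
    have h1 := hC x y
    have h2 := hC y x
    rw [hsym x y, h2] at h1
    field_simp at h1
    linarith
  set v : Fin n → ℝ := Pi.single i 1 - Pi.single j 1 with hv
  -- compute the components
  have hAv : ∀ k, (M⁻¹ *ᵥ v) k = (C k i - C k j) / N := by
    intro k
    simp [hv, Matrix.mulVec_sub, hC, div_sub_div_same]
  have hvAv : v ⬝ᵥ (M⁻¹ *ᵥ v) = (M⁻¹ *ᵥ v) i - (M⁻¹ *ᵥ v) j := by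
    simp [hv, sub_dotProduct, dotProduct_single]
  have hden : 1 + v ⬝ᵥ (M⁻¹ *ᵥ v) = (N + F i j + F j i) / N := by
    rw [hvAv, hAv, hAv, hF, hF, hCsym j i]
    field_simp
    ring
  have hdenpos : 0 < 1 + v ⬝ᵥ (M⁻¹ *ᵥ v) := by
    have h0 : 0 ≤ v ⬝ᵥ (M⁻¹ *ᵥ v) := by simpa using hApd.posSemidef.dotProduct_mulVec_nonneg v
    linarith
  have hDpos : 0 < N + F i j + F j i := by
    have := hden ▸ hdenpos
    exact (div_pos_iff.mp this).resolve_right (fun h => absurd h.2 (not_lt.mpr hN0.le)) |>.1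
  have hnum : (M⁻¹ *ᵥ v) ⬝ᵥ (M⁻¹ *ᵥ v) = (∑ k, (F i k - F j k) ^ 2) / N ^ 2 := by
    rw [dotProduct, Finset.sum_div]
    refine Finset.sum_congr rfl fun k _ => ?_
    rw [hAv, hF, hF, hCsym i k, hCsym j k]
    field_simp
    ring
  rw [hnum, hden]
  have h1 : N ≠ 0 := hN0.ne'
  have h2 : N + F i j + F j i ≠ 0 := hDpos.ne'
  field_simp
end
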